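/- Let n ≤ p and let Σ ∈ ℝ^{n×p} have full row rank n, so that Σ·Σᵀ is invertible, and set Σ^♯ = Σᵀ·(Σ·Σᵀ)⁻¹. Then for every δΣ ∈ ℝ^{n×p}, the derivative at t = 0 of t ↦ log det(((Σ + t·δΣ)·(Σ + t·δΣ)ᵀ)^{1/2}) equals tr(Σ^♯·δΣ). -/

import Mathlib

/-!
Since `det (A^{1/2}) = √(det A)` for positive semidefinite `A`, the function to differentiate is
`½ log det M(t)` with `M(t) = (Σ + t δΣ)(Σ + t δΣ)ᵀ`. Jacobi's formula gives
`(log det M)'(0) = tr (M(0)⁻¹ M'(0))` with `M'(0) = δΣ Σᵀ + Σ δΣᵀ`, and since `(Σ Σᵀ)⁻¹` is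
symmetric, cyclicity and transpose-invariance of the trace turn both terms into `tr (Σ^♯ δΣ)`.
Invertibility of `Σ Σᵀ` comes from `rank (Σ Σᵀ) = rank Σ = n`.
-/

open Matrix

/-- The positive semidefinite square root of a positive semidefinite real matrix
(and junk value `0` otherwise); for a positive definite `A` this is the unique
symmetric positive definite square root `A^{1/2}`. -/
noncomputable def matSqrt {n : ℕ} (A : Matrix (Fin n) (Fin n) ℝ) :
    Matrix (Fin n) (Fin n) ℝ :=
  open Classical in
  if h : A.PosSemidef then
    (h.1.eigenvectorUnitary : Matrix (Fin n) (Fin n) ℝ) *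
      diagonal ((↑) ∘ Real.sqrt ∘ h.1.eigenvalues) *
      (star h.1.eigenvectorUnitary : Matrix (Fin n) (Fin n) ℝ)
  else 0

open scoped MatrixOrder

section matSqrt

variable {k : ℕ} {A : Matrix (Fin k) (Fin k) ℝ}

theorem matSqrt_eq_cfcSqrt (hA : A.PosSemidef) : matSqrt A = CFC.sqrt A := by
  rw [matSqrt, dif_pos hA, CFC.sqrt_eq_cfc, cfc_nnreal_eq_real _ A, hA.1.cfc_eq]
  simp [IsHermitian.cfc, Function.comp_def, max_eq_left (hA.eigenvalues_nonneg _)]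

theorem det_matSqrt (hA : A.PosSemidef) : (matSqrt A).det = √A.det := by
  rw [matSqrt_eq_cfcSqrt hA, hA.det_sqrt, RCLike.sqrt_real]

theorem log_det_matSqrt_self_mul_transpose {p : ℕ} (B : Matrix (Fin k) (Fin p) ℝ) :
    Real.log (matSqrt (B * Bᵀ)).det = Real.log (B * Bᵀ).det / 2 := by
  have hB : (B * Bᵀ).PosSemidef := by simpa using posSemidef_self_mul_conjTranspose B
  rw [det_matSqrt hB, Real.log_sqrt hB.det_nonneg]

end matSqrt

namespace Matrix

theorem trace_mul_add_mul_transpose {n p R : Type*} [Fintype n] [Fintype p] [CommRing R]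
    {S : Matrix n n R} (hS : S.IsSymm) (A B : Matrix n p R) :
    (S * (B * Aᵀ + A * Bᵀ)).trace = 2 * (Aᵀ * S * B).trace := by
  have hcycle : (S * (B * Aᵀ)).trace = (Aᵀ * S * B).trace := by
    rw [← Matrix.mul_assoc, trace_mul_cycle]
  have htranspose : (S * (A * Bᵀ)).trace = (Aᵀ * S * B).trace := by
    rw [← trace_transpose, transpose_mul, transpose_mul, transpose_transpose, hS.eq,
      trace_mul_cycle, trace_mul_cycle]
  rw [Matrix.mul_add, trace_add, hcycle, htranspose, two_mul]

section Entrywise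

variable {𝕜 : Type*} [NontriviallyNormedField 𝕜] {l m o : Type*}

theorem hasDerivAt_add_smul_apply (A B : Matrix l m 𝕜) (t : 𝕜) (i : l) (j : m) :
    HasDerivAt (fun s => (A + s • B) i j) (B i j) t := by
  simpa only [add_apply, smul_apply, smul_eq_mul] using
    (hasDerivAt_mul_const (B i j)).const_add (A i j)

theorem hasDerivAt_mul_apply [Fintype m] {M : 𝕜 → Matrix l m 𝕜} {N : 𝕜 → Matrix m o 𝕜}
    {M' : Matrix l m 𝕜} {N' : Matrix m o 𝕜} {t : 𝕜}
    (hM : ∀ i j, HasDerivAt (fun s => M s i j) (M' i j) t)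
    (hN : ∀ i j, HasDerivAt (fun s => N s i j) (N' i j) t) (i : l) (k : o) :
    HasDerivAt (fun s => (M s * N s) i k) ((M' * N t + M t * N') i k) t := by
  simp only [mul_apply, add_apply, ← Finset.sum_add_distrib]
  exact HasDerivAt.fun_sum fun j _ => (hM i j).mul (hN j k)

end Entrywise

section Jacobi

variable {n : Type*} [Fintype n] [DecidableEq n]

theorem isUnit_of_rank_eq_card {K : Type*} [Field K] {A : Matrix n n K}
    (h : A.rank = Fintype.card n) : IsUnit A := by
  rw [← linearIndependent_rows_iff_isUnit, linearIndependent_iff_card_eq_finrank_span, ← h]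
  exact rank_eq_finrank_span_row A

theorem trace_adjugate_mul_eq_sum_det_updateCol {R : Type*} [CommRing R] (A B : Matrix n n R) :
    (adjugate A * B).trace = ∑ i, (A.updateCol i fun k => B k i).det := by
  simp only [trace, diag, mul_apply, ← cramer_apply, cramer_eq_adjugate_mulVec, mulVec, dotProduct]

theorem det_updateCol_eq_sum {R : Type*} [CommRing R] (A : Matrix n n R) (i : n) (c : n → R) :
    (A.updateCol i c).det = ∑ σ : Equiv.Perm n,
      Equiv.Perm.sign σ • ((∏ j ∈ Finset.univ.erase i, A (σ j) j) * c (σ i)) := by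
  rw [det_apply]
  refine Finset.sum_congr rfl fun σ _ => ?_
  rw [← Finset.prod_erase_mul _ _ (Finset.mem_univ i), updateCol_self]
  congr 2
  exact Finset.prod_congr rfl fun j hj => updateCol_ne (Finset.ne_of_mem_erase hj)

/-- Jacobi's formula. Differentiating the Leibniz expansion by the product rule, the terms in
which column `i` is differentiated add up to the determinant with column `i` replaced by that
of `M'`, which is a Cramer's-rule entry of `adjugate (M t) * M'`. -/
theorem hasDerivAt_det {𝕜 : Type*} [NontriviallyNormedField 𝕜] {M : 𝕜 → Matrix n n 𝕜}
    {M' : Matrix n n 𝕜} {t : 𝕜} (hM : ∀ i j, HasDerivAt (fun s => M s i j) (M' i j) t) :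
    HasDerivAt (fun s => (M s).det) (adjugate (M t) * M').trace t := by
  simp only [det_apply]
  have hterm (σ : Equiv.Perm n) := (HasDerivAt.fun_finsetProd (u := Finset.univ) fun i _ =>
    hM (σ i) i).const_smul (Equiv.Perm.sign σ)
  refine (HasDerivAt.fun_sum (u := Finset.univ) fun σ _ => hterm σ).congr_deriv ?_
  simp only [trace_adjugate_mul_eq_sum_det_updateCol, det_updateCol_eq_sum, smul_eq_mul,
    Finset.smul_sum]
  exact Finset.sum_comm

theorem hasDerivAt_log_det {M : ℝ → Matrix n n ℝ} {M' : Matrix n n ℝ} {t : ℝ}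
    (hM : ∀ i j, HasDerivAt (fun s => M s i j) (M' i j) t) (hdet : (M t).det ≠ 0) :
    HasDerivAt (fun s => Real.log (M s).det) ((M t)⁻¹ * M').trace t := by
  refine ((hasDerivAt_det hM).log hdet).congr_deriv ?_
  rw [inv_def, Ring.inverse_eq_inv', smul_mul, trace_smul, smul_eq_mul, div_eq_inv_mul]

end Jacobi

end Matrix

theorem deriv_logdet_sqrt_rectangular_general (n p : ℕ)
    (Sig : Matrix (Fin n) (Fin p) ℝ) (hrank : Sig.rank = n) :
    IsUnit (Sig * Sigᵀ).det ∧
      ∀ dS : Matrix (Fin n) (Fin p) ℝ,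
        deriv (fun t : ℝ =>
          Real.log (matSqrt ((Sig + t • dS) * (Sig + t • dS)ᵀ)).det) 0 =
        (Sigᵀ * (Sig * Sigᵀ)⁻¹ * dS).trace := by
  have hunit : IsUnit (Sig * Sigᵀ).det := by
    rw [← isUnit_iff_isUnit_det]
    exact isUnit_of_rank_eq_card (by rw [rank_self_mul_transpose, hrank, Fintype.card_fin])
  refine ⟨hunit, fun dS => ?_⟩
  have hcurve := hasDerivAt_mul_apply (hasDerivAt_add_smul_apply Sig dS 0)
    (N := fun s => (Sig + s • dS)ᵀ) (N' := dSᵀ) fun i j => by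
      simpa only [transpose_apply] using hasDerivAt_add_smul_apply Sig dS 0 j i
  have hderiv := (hasDerivAt_log_det hcurve (by simpa using hunit.ne_zero)).div_const 2
  have hsymm : (Sig * Sigᵀ)⁻¹.IsSymm := IsSymm.inv (transpose_mul _ _)
  simp only [log_det_matSqrt_self_mul_transpose]
  rw [hderiv.deriv]
  simp only [zero_smul, add_zero, trace_mul_add_mul_transpose hsymm]
  ring

/-- **Lemma 5 (rectangular chain rule).** For full-row-rank `Sig ∈ ℝ^{n×p}`
(`n ≤ p`), `Sig Sigᵀ` is invertible and the directional derivative of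
`J(Σ) = log det ((Σ Σᵀ)^{1/2})` in any direction `dS` equals `tr (Sig♯ dS)`,
with `Sig♯ = Sigᵀ (Sig Sigᵀ)⁻¹` the Moore–Penrose pseudo-inverse. -/
theorem deriv_logdet_sqrt_rectangular (n p : ℕ) (hnp : n ≤ p)
    (Sig : Matrix (Fin n) (Fin p) ℝ) (hrank : Sig.rank = n) :
    IsUnit (Sig * Sigᵀ).det ∧
      ∀ dS : Matrix (Fin n) (Fin p) ℝ,
        deriv (fun t : ℝ =>
          Real.log (matSqrt ((Sig + t • dS) * (Sig + t • dS)ᵀ)).det) 0 =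
        (Sigᵀ * (Sig * Sigᵀ)⁻¹ * dS).trace :=
  deriv_logdet_sqrt_rectangular_general n p Sig hrank
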